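/- arXiv:1405.2805 — 3 statements merged into one kernel-verified Lean document; each statement's English description precedes it below -/
import Mathlib

section
/- Let 1 ≤ r ≤ n and let p be a size vector of length n. Then there exists a maximal pair (A, B) of r-cross-intersecting families in S_p such that both A and B are monotone. -/
open Finset

/-- Families `A`, `B` of vectors in `S_p` (modelled as `∀ i, Fin (p i)`, with
`[p i] = {1, …, p i}` identified with `Fin (p i) = {0, …, p i - 1}`) are
`r`-cross-intersecting: every `x ∈ A` and `y ∈ B` agree in at least `r`
coordinates. -/
def CrossInt {n : ℕ} {p : Fin n → ℕ} (r : ℕ)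
    (A B : Finset (∀ i, Fin (p i))) : Prop :=
  ∀ x ∈ A, ∀ y ∈ B, r ≤ (univ.filter (fun i => x i = y i)).card

/-- `(A, B)` is a maximal `r`-cross-intersecting pair. -/
def MaxPair {n : ℕ} {p : Fin n → ℕ} (r : ℕ)
    (A B : Finset (∀ i, Fin (p i))) : Prop :=
  CrossInt r A B ∧ ∀ A' B' : Finset (∀ i, Fin (p i)),
    CrossInt r A' B' → A'.card * B'.card ≤ A.card * B.card

/-- The support of a vector `x`: the set of coordinates where `x_i > 1`
(i.e. where `x i` is not the least element `0` of `Fin (p i)`). -/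
def suppv {n : ℕ} {p : Fin n → ℕ} (x : ∀ i, Fin (p i)) : Finset (Fin n) :=
  univ.filter (fun i => 0 < (x i : ℕ))

/-- A family `A ⊆ S_p` is monotone if `x ∈ A`, `y ∈ S_p` and
`supp(y) ⊆ supp(x)` imply `y ∈ A`. -/
def MonotoneFam {n : ℕ} {p : Fin n → ℕ} (A : Finset (∀ i, Fin (p i))) : Prop :=
  ∀ x ∈ A, ∀ y : ∀ i, Fin (p i), suppv y ⊆ suppv x → y ∈ A

namespace Lemma10Aux

variable {n : ℕ} {p : Fin n → ℕ} [∀ i, NeZero (p i)]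

/-- Zero out coordinate `i` of `x` if its value there is `a`. -/
def shiftv (i : Fin n) (a : Fin (p i)) (x : ∀ j, Fin (p j)) : ∀ j, Fin (p j) :=
  Function.update x i (if x i = a then 0 else x i)

lemma shiftv_apply_ne (i : Fin n) (a : Fin (p i)) (x : ∀ j, Fin (p j)) {j : Fin n}
    (h : j ≠ i) : shiftv i a x j = x j := Function.update_of_ne h _ _

lemma shiftv_apply_eq (i : Fin n) (a : Fin (p i)) (x : ∀ j, Fin (p j)) :
    shiftv i a x i = if x i = a then 0 else x i := Function.update_self _ _ _

lemma shiftv_eq_self {i : Fin n} {a : Fin (p i)} {x : ∀ j, Fin (p j)} (h : x i ≠ a) :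
    shiftv i a x = x := by
  funext j
  rcases eq_or_ne j i with rfl | hj
  · rw [shiftv_apply_eq, if_neg h]
  · exact shiftv_apply_ne _ _ _ hj

lemma shiftv_apply_of_eq {i : Fin n} {a : Fin (p i)} {x : ∀ j, Fin (p j)} (h : x i = a) :
    shiftv i a x i = 0 := by rw [shiftv_apply_eq, if_pos h]

lemma shiftv_zero {i : Fin n} {x : ∀ j, Fin (p j)} (h : x i = 0) :
    shiftv i (x i) x = x := by
  funext j
  rcases eq_or_ne j i with rfl | hj
  · rw [shiftv_apply_of_eq rfl, h]
  · exact shiftv_apply_ne _ _ _ hj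

lemma shiftv_congr {i : Fin n} {a : Fin (p i)} {x y : ∀ j, Fin (p j)} (j : Fin n)
    (h : x j = y j) : shiftv i a x j = shiftv i a y j := by
  rcases eq_or_ne j i with rfl | hj
  · rw [shiftv_apply_eq, shiftv_apply_eq, h]
  · rw [shiftv_apply_ne _ _ _ hj, shiftv_apply_ne _ _ _ hj, h]

variable [DecidableEq (∀ j, Fin (p j))]

/-- The compression map for a family `A` in coordinate `i`, value `a`. -/
def compF (i : Fin n) (a : Fin (p i)) (A : Finset (∀ j, Fin (p j))) :
    (∀ j, Fin (p j)) → (∀ j, Fin (p j)) :=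
  fun x => if shiftv i a x ∈ A then x else shiftv i a x

lemma compF_injOn (i : Fin n) (a : Fin (p i)) (A : Finset (∀ j, Fin (p j))) :
    Set.InjOn (compF i a A) A := by
  intro x hx y hy h
  unfold compF at h
  by_cases hxs : shiftv i a x ∈ A <;> by_cases hys : shiftv i a y ∈ A
  · rw [if_pos hxs, if_pos hys] at h; exact h
  · rw [if_pos hxs, if_neg hys] at h
    exact absurd (h ▸ (hx : x ∈ A)) hys
  · rw [if_neg hxs, if_pos hys] at h
    exact absurd (by rw [h]; exact (hy : y ∈ A)) hxs
  · rw [if_neg hxs, if_neg hys] at h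
    have hxa : x i = a := by
        by_contra hne; exact hxs (by rw [shiftv_eq_self hne]; exact (hx : x ∈ A))
    have hya : y i = a := by
      by_contra hne; exact hys (by rw [shiftv_eq_self hne]; exact (hy : y ∈ A))
    funext j
    rcases eq_or_ne j i with rfl | hj
    · rw [hxa, hya]
    · have := congrFun h j
      rwa [shiftv_apply_ne _ _ _ hj, shiftv_apply_ne _ _ _ hj] at this

lemma card_comp (i : Fin n) (a : Fin (p i)) (A : Finset (∀ j, Fin (p j))) :
    (A.image (compF i a A)).card = A.card :=
  card_image_of_injOn (compF_injOn i a A)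

lemma crossInt_comp {r : ℕ} {i : Fin n} {a : Fin (p i)} (ha : a ≠ 0)
    {A B : Finset (∀ j, Fin (p j))} (h : CrossInt r A B) :
    CrossInt r (A.image (compF i a A)) (B.image (compF i a B)) := by
  intro x' hx' y' hy'
  obtain ⟨x, hx, rfl⟩ := mem_image.mp hx'
  obtain ⟨y, hy, rfl⟩ := mem_image.mp hy'
  unfold compF
  have hshift_i : ∀ (z : ∀ j, Fin (p j)), shiftv i a z i ≠ a := by
    intro z
    rcases eq_or_ne (z i) a with hz | hz
    · rw [shiftv_apply_of_eq hz]; exact fun e => ha e.symm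
    · rw [shiftv_eq_self hz]; exact hz
  by_cases hxs : shiftv i a x ∈ A <;> by_cases hys : shiftv i a y ∈ B
  · rw [if_pos hxs, if_pos hys]; exact h x hx y hy
  · -- x kept, y shifted : use shiftv x ∈ A against y ∈ B
    rw [if_pos hxs, if_neg hys]
    have hya : y i = a := by
      by_contra hne; exact hys (by rw [shiftv_eq_self hne]; exact hy)
    refine le_trans (h _ hxs y hy) (card_le_card ?_)
    intro j hj
    simp only [mem_filter, mem_univ, true_and] at hj ⊢
    rcases eq_or_ne j i with rfl | hj'
    · exact absurd (hj.trans hya) (hshift_i x)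
    · rw [shiftv_apply_ne _ _ _ hj']
      rw [shiftv_apply_ne _ _ _ hj'] at hj
      exact hj
  · -- x shifted, y kept
    rw [if_neg hxs, if_pos hys]
    have hxa : x i = a := by
      by_contra hne; exact hxs (by rw [shiftv_eq_self hne]; exact hx)
    refine le_trans (h x hx _ hys) (card_le_card ?_)
    intro j hj
    simp only [mem_filter, mem_univ, true_and] at hj ⊢
    rcases eq_or_ne j i with rfl | hj'
    · exact absurd (hj.symm.trans hxa) (hshift_i y)
    · rw [shiftv_apply_ne _ _ _ hj']
      rw [shiftv_apply_ne _ _ _ hj'] at hj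
      exact hj
  · -- both shifted
    rw [if_neg hxs, if_neg hys]
    refine le_trans (h x hx y hy) (card_le_card ?_)
    intro j hj
    simp only [mem_filter, mem_univ, true_and] at hj ⊢
    exact shiftv_congr j hj

/-- Total weight of a family. -/
def wt (A : Finset (∀ j, Fin (p j))) : ℕ := ∑ x ∈ A, ∑ j, (x j : ℕ)

lemma wt_shift_le (i : Fin n) (a : Fin (p i)) (x : ∀ j, Fin (p j)) :
    ∑ j, ((shiftv i a x) j : ℕ) ≤ ∑ j, (x j : ℕ) := by
  refine Finset.sum_le_sum fun j _ => ?_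
  rcases eq_or_ne j i with rfl | hj
  · rw [shiftv_apply_eq]
    split
    all_goals simp
  · exact le_of_eq (by rw [shiftv_apply_ne _ _ _ hj])

lemma wt_shift_lt {i : Fin n} {a : Fin (p i)} (ha : a ≠ 0) {x : ∀ j, Fin (p j)}
    (hx : x i = a) : ∑ j, ((shiftv i a x) j : ℕ) < ∑ j, (x j : ℕ) := by
  refine Finset.sum_lt_sum (fun j _ => ?_) ⟨i, mem_univ i, ?_⟩
  · rcases eq_or_ne j i with rfl | hj
    · rw [shiftv_apply_eq]; split
      all_goals simp
    · exact le_of_eq (by rw [shiftv_apply_ne _ _ _ hj])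
  · rw [shiftv_apply_of_eq hx, Fin.val_zero, hx]
    exact Nat.pos_of_ne_zero (fun h0 => ha (Fin.ext (by simp [h0])))

lemma wt_comp_le (i : Fin n) (a : Fin (p i)) (A : Finset (∀ j, Fin (p j))) :
    wt (A.image (compF i a A)) ≤ wt A := by
  unfold wt
  rw [Finset.sum_image (fun x hx y hy h => compF_injOn i a A hx hy h)]
  refine Finset.sum_le_sum fun x _ => ?_
  unfold compF
  split
  · exact le_refl _
  · exact wt_shift_le i a x

lemma wt_comp_lt {i : Fin n} {a : Fin (p i)} (ha : a ≠ 0)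
    {A : Finset (∀ j, Fin (p j))} {x : ∀ j, Fin (p j)} (hx : x ∈ A)
    (hxa : x i = a) (hns : shiftv i a x ∉ A) :
    wt (A.image (compF i a A)) < wt A := by
  unfold wt
  rw [Finset.sum_image (fun x hx y hy h => compF_injOn i a A hx hy h)]
  refine Finset.sum_lt_sum (fun y _ => ?_) ⟨x, hx, ?_⟩
  · unfold compF; split
    · exact le_refl _
    · exact wt_shift_le i a y
  · unfold compF
    rw [if_neg hns]
    exact wt_shift_lt ha hxa

end Lemma10Aux

open Lemma10Aux

/-- Lemma 10, first part: for every `1 ≤ r ≤ n` and every size vector `p` of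
length `n` there exists a maximal pair of `r`-cross-intersecting families
`A, B ⊆ S_p` such that both `A` and `B` are monotone. -/
theorem lemma10_part1 {n : ℕ} (r : ℕ) (hr : 1 ≤ r) (hrn : r ≤ n)
    (p : Fin n → ℕ) (hp : ∀ i, 2 ≤ p i) :
    ∃ A B : Finset (∀ i, Fin (p i)),
      MaxPair r A B ∧ MonotoneFam A ∧ MonotoneFam B := by
  classical
  haveI : ∀ i, NeZero (p i) := fun i => ⟨by have := hp i; omega⟩
  -- the (nonempty, finite) collection of r-cross-intersecting pairs
  set S : Finset (Finset (∀ i, Fin (p i)) × Finset (∀ i, Fin (p i))) :=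
    univ.filter (fun q => CrossInt r q.1 q.2) with hS
  have hSmem : ∀ q, q ∈ S ↔ CrossInt r q.1 q.2 := by
    intro q; simp [hS]
  have hSne : S.Nonempty := ⟨(∅, ∅), (hSmem _).mpr (fun x hx => absurd hx (notMem_empty x))⟩
  obtain ⟨q₀, hq₀S, hq₀max⟩ := S.exists_max_image (fun q => q.1.card * q.2.card) hSne
  set T : Finset (Finset (∀ i, Fin (p i)) × Finset (∀ i, Fin (p i))) :=
    S.filter (fun q => q.1.card * q.2.card = q₀.1.card * q₀.2.card) with hT
  have hTne : T.Nonempty := ⟨q₀, mem_filter.mpr ⟨hq₀S, rfl⟩⟩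
  obtain ⟨q, hqT, hqmin⟩ := T.exists_min_image (fun q => wt q.1 + wt q.2) hTne
  have hqS : q ∈ S := (mem_filter.mp hqT).1
  have hqcard : q.1.card * q.2.card = q₀.1.card * q₀.2.card := (mem_filter.mp hqT).2
  have hcross : CrossInt r q.1 q.2 := (hSmem q).mp hqS
  have hmax : ∀ A' B' : Finset (∀ i, Fin (p i)),
      CrossInt r A' B' → A'.card * B'.card ≤ q.1.card * q.2.card := by
    intro A' B' h'
    rw [hqcard]
    exact hq₀max (A', B') ((hSmem _).mpr h')
  -- stability of q.1 under shifting
  have stabA : ∀ (i : Fin n) (x : ∀ j, Fin (p j)), x ∈ q.1 → shiftv i (x i) x ∈ q.1 := by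
    intro i x hx
    by_contra hns
    have ha : x i ≠ 0 := fun h0 => hns (by rw [shiftv_zero h0]; exact hx)
    set a := x i with haa
    set A' := q.1.image (compF i a q.1) with hA'
    set B' := q.2.image (compF i a q.2) with hB'
    have hcross' : CrossInt r A' B' := crossInt_comp ha hcross
    have hcards : A'.card * B'.card = q.1.card * q.2.card := by
      rw [hA', hB', card_comp, card_comp]
    have hmemT : (A', B') ∈ T := by
      refine mem_filter.mpr ⟨(hSmem _).mpr hcross', ?_⟩
      simpa using hcards.trans hqcard
    have hwt := hqmin (A', B') hmemT
    have h1 : wt A' < wt q.1 := wt_comp_lt ha hx rfl hns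
    have h2 : wt B' ≤ wt q.2 := wt_comp_le i a q.2
    simp only at hwt
    omega
  -- key: any x ∈ q.1, y ∈ q.2 agree in ≥ r coordinates where both are zero
  have key : ∀ (k : ℕ) (x : ∀ j, Fin (p j)), x ∈ q.1 → ∀ y ∈ q.2,
      (univ.filter (fun j => x j = y j ∧ x j ≠ 0)).card ≤ k →
      r ≤ (univ.filter (fun j => x j = 0 ∧ y j = 0)).card := by
    intro k
    induction k with
    | zero =>
      intro x hx y hy h0
      refine le_trans (hcross x hx y hy) (card_le_card ?_)
      intro j hj
      simp only [mem_filter, mem_univ, true_and] at hj ⊢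
      have hem : (univ.filter (fun j => x j = y j ∧ x j ≠ 0)) = ∅ :=
        card_eq_zero.mp (Nat.le_zero.mp h0)
      have : j ∉ (univ.filter (fun j => x j = y j ∧ x j ≠ 0)) := by rw [hem]; exact notMem_empty j
      simp only [mem_filter, mem_univ, true_and, not_and, not_not] at this
      have hx0 : x j = 0 := this hj
      exact ⟨hx0, hj ▸ hx0⟩
    | succ k ih =>
      intro x hx y hy h
      by_cases hk : (univ.filter (fun j => x j = y j ∧ x j ≠ 0)).card ≤ k
      · exact ih x hx y hy hk
      · have hne : (univ.filter (fun j => x j = y j ∧ x j ≠ 0)).Nonempty :=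
          card_pos.mp (by omega)
        obtain ⟨i, hi⟩ := hne
        simp only [mem_filter, mem_univ, true_and] at hi
        obtain ⟨hixy, hix0⟩ := hi
        have hx' : shiftv i (x i) x ∈ q.1 := stabA i x hx
        have hx'i : shiftv i (x i) x i = 0 := shiftv_apply_of_eq rfl
        have hsub : (univ.filter (fun j => shiftv i (x i) x j = y j ∧ shiftv i (x i) x j ≠ 0)) ⊆
            (univ.filter (fun j => x j = y j ∧ x j ≠ 0)).erase i := by
          intro j hj
          simp only [mem_filter, mem_univ, true_and] at hj
          have hji : j ≠ i := by
            rintro rfl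
            exact hj.2 hx'i
          refine mem_erase.mpr ⟨hji, ?_⟩
          simp only [mem_filter, mem_univ, true_and]
          rw [shiftv_apply_ne _ _ _ hji] at hj
          exact hj
        have hcard : (univ.filter
            (fun j => shiftv i (x i) x j = y j ∧ shiftv i (x i) x j ≠ 0)).card ≤ k := by
          have h1 := card_le_card hsub
          have h2 : ((univ.filter (fun j => x j = y j ∧ x j ≠ 0)).erase i).card =
              (univ.filter (fun j => x j = y j ∧ x j ≠ 0)).card - 1 :=
            card_erase_of_mem (mem_filter.mpr ⟨mem_univ i, hixy, hix0⟩)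
          omega
        have hres := ih _ hx' y hy hcard
        have heq : (univ.filter (fun j => shiftv i (x i) x j = 0 ∧ y j = 0)) =
            (univ.filter (fun j => x j = 0 ∧ y j = 0)) := by
          ext j
          simp only [mem_filter, mem_univ, true_and]
          rcases eq_or_ne j i with rfl | hj
          · constructor
            · rintro ⟨-, hy0⟩
              exact absurd (hixy.trans hy0) hix0
            · rintro ⟨hx0, -⟩
              exact absurd hx0 hix0
          · rw [shiftv_apply_ne _ _ _ hj]
        rw [heq] at hres
        exact hres
  -- monotone closures
  set Astar : Finset (∀ i, Fin (p i)) :=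
    univ.filter (fun y => ∃ x ∈ q.1, suppv y ⊆ suppv x) with hAstar
  set Bstar : Finset (∀ i, Fin (p i)) :=
    univ.filter (fun y => ∃ x ∈ q.2, suppv y ⊆ suppv x) with hBstar
  have hAmem : ∀ y, y ∈ Astar ↔ ∃ x ∈ q.1, suppv y ⊆ suppv x := by
    intro y; simp [hAstar]
  have hBmem : ∀ y, y ∈ Bstar ↔ ∃ x ∈ q.2, suppv y ⊆ suppv x := by
    intro y; simp [hBstar]
  have hzero : ∀ (z : ∀ i, Fin (p i)) (j : Fin n), j ∉ suppv z → z j = 0 := by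
    intro z j hj
    simp only [suppv, mem_filter, mem_univ, true_and, not_lt, Nat.le_zero] at hj
    exact Fin.ext (by rw [hj, Fin.val_zero])
  have hnotsupp : ∀ (z : ∀ i, Fin (p i)) (j : Fin n), z j = 0 → j ∉ suppv z := by
    intro z j hj
    simp only [suppv, mem_filter, mem_univ, true_and, not_lt, Nat.le_zero, hj, Fin.val_zero]
  have hcrossstar : CrossInt r Astar Bstar := by
    intro y hy z hz
    obtain ⟨x, hx, hyx⟩ := (hAmem y).mp hy
    obtain ⟨w, hw, hzw⟩ := (hBmem z).mp hz
    refine le_trans (key _ x hx w hw (le_refl _)) (card_le_card ?_)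
    intro j hj
    simp only [mem_filter, mem_univ, true_and] at hj ⊢
    have hy0 : y j = 0 := hzero y j (fun hmem => hnotsupp x j hj.1 (hyx hmem))
    have hz0 : z j = 0 := hzero z j (fun hmem => hnotsupp w j hj.2 (hzw hmem))
    rw [hy0, hz0]
  have hsubA : q.1 ⊆ Astar := fun x hx => (hAmem x).mpr ⟨x, hx, subset_rfl⟩
  have hsubB : q.2 ⊆ Bstar := fun x hx => (hBmem x).mpr ⟨x, hx, subset_rfl⟩
  refine ⟨Astar, Bstar, ⟨hcrossstar, ?_⟩, ?_, ?_⟩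
  · intro A' B' h'
    exact le_trans (hmax A' B' h')
      (Nat.mul_le_mul (card_le_card hsubA) (card_le_card hsubB))
  · intro x hx y hy
    obtain ⟨x', hx', hxx'⟩ := (hAmem x).mp hx
    exact (hAmem y).mpr ⟨x', hx', hy.trans hxx'⟩
  · intro x hx y hy
    obtain ⟨x', hx', hxx'⟩ := (hBmem x).mp hx
    exact (hBmem y).mpr ⟨x', hx', hy.trans hxx'⟩
end

section
/- Let p be a size vector of length n, let i ∈ [n] and j ∈ [p_i] with j ≠ 1, and define the shift operation φ_{i,j} as follows: for x ∈ S_p let φ_i(x) be x with its i-th coordinate replaced by 1; for a family A ⊆ S_p and x ∈ A let φ_{i,j}(x, A) = φ_i(x) if x_i = j and φ_i(x) ∉ A, and φ_{i,j}(x, A) = x otherwise; and let φ_{i,j}(A) = {φ_{i,j}(x, A) : x ∈ A}. Then |φ_{i,j}(A)| = |A| for every A ⊆ S_p, and if A, B ⊆ S_p are r-cross-intersecting (for any 1 ≤ r ≤ n), then φ_{i,j}(A) and φ_{i,j}(B) are also r-cross-intersecting. -/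
open Finset

/-- `φ_i(x)`: the vector `x` with its `i`-th coordinate replaced by the value
`1` (the least element `0` of `Fin (p i)`). -/
def phiProj {n : ℕ} {p : Fin n → ℕ} (hp : ∀ i, 2 ≤ p i) (i : Fin n)
    (x : ∀ j, Fin (p j)) : ∀ j, Fin (p j) :=
  Function.update x i ⟨0, by have := hp i; omega⟩

/-- The shift operation `φ_{i,j}` applied to a family `A ⊆ S_p`:
each `x ∈ A` with `x_i = j` and `φ_i(x) ∉ A` is replaced by `φ_i(x)`;
all other elements are kept. -/
def shift {n : ℕ} {p : Fin n → ℕ} (hp : ∀ i, 2 ≤ p i) (i : Fin n)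
    (j : Fin (p i)) (A : Finset (∀ k, Fin (p k))) : Finset (∀ k, Fin (p k)) :=
  A.image (fun x => if x i = j ∧ phiProj hp i x ∉ A then phiProj hp i x else x)

/-- The shift operations preserve cardinality, and they preserve the property
of being `r`-cross-intersecting (for any `1 ≤ r ≤ n`). Here `j ≠ 1` is the
requirement that `j` is not the least element of `Fin (p i)`. -/
theorem shift_card_and_crossInt {n : ℕ} (p : Fin n → ℕ) (hp : ∀ i, 2 ≤ p i)
    (i : Fin n) (j : Fin (p i)) (hj : (j : ℕ) ≠ 0) :
    (∀ A : Finset (∀ k, Fin (p k)), (shift hp i j A).card = A.card) ∧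
    (∀ r : ℕ, 1 ≤ r → r ≤ n → ∀ A B : Finset (∀ k, Fin (p k)),
      CrossInt r A B → CrossInt r (shift hp i j A) (shift hp i j B)) := by
  classical
  have hpi : ∀ x : ∀ k, Fin (p k), ((phiProj hp i x) i : ℕ) = 0 := fun x => by
    simp [phiProj]
  have hpk : ∀ (x : ∀ k, Fin (p k)) (k : Fin n), k ≠ i →
      (phiProj hp i x) k = x k := fun x k hk => by
    simp [phiProj, Function.update_of_ne hk]
  constructor
  · intro A
    rw [shift, card_image_of_injOn]
    intro x hx y hy hxy
    by_cases h1 : x i = j ∧ phiProj hp i x ∉ A <;>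
      by_cases h2 : y i = j ∧ phiProj hp i y ∉ A
    · simp only [if_pos h1, if_pos h2] at hxy
      funext k
      by_cases hk : k = i
      · subst hk; rw [h1.1, h2.1]
      · have := congrFun hxy k
        rwa [hpk x k hk, hpk y k hk] at this
    · simp only [if_pos h1, if_neg h2] at hxy
      exact absurd (hxy ▸ hy) h1.2
    · simp only [if_neg h1, if_pos h2] at hxy
      exact absurd (hxy.symm ▸ hx) h2.2
    · simp only [if_neg h1, if_neg h2] at hxy
      exact hxy
  · intro r hr hrn A B hAB x' hx' y' hy'
    obtain ⟨x, hx, hfx⟩ := mem_image.1 hx'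
    obtain ⟨y, hy, hfy⟩ := mem_image.1 hy'
    have key : ∀ (u v : ∀ k, Fin (p k)),
        (∀ k : Fin n, k ≠ i → u k = v k → x' k = y' k) →
        (u i = v i → x' i = y' i) →
        r ≤ (univ.filter (fun k => u k = v k)).card →
        r ≤ (univ.filter (fun k => x' k = y' k)).card := by
      intro u v h1 h2 h3
      refine le_trans h3 (card_le_card ?_)
      intro k hk
      simp only [mem_filter, mem_univ, true_and] at hk ⊢
      by_cases hki : k = i
      · subst hki; exact h2 hk
      · exact h1 k hki hk
    by_cases cx : x i = j ∧ phiProj hp i x ∉ A <;>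
      by_cases cy : y i = j ∧ phiProj hp i y ∉ B
    · -- both shifted
      rw [if_pos cx] at hfx; rw [if_pos cy] at hfy
      subst hfx; subst hfy
      refine key x y (fun k hk h => by rw [hpk x k hk, hpk y k hk]; exact h)
        (fun _ => Fin.ext (by rw [hpi, hpi])) (hAB x hx y hy)
    · -- x shifted, y not
      rw [if_pos cx] at hfx; rw [if_neg cy] at hfy
      subst hfx; subst hfy
      by_cases hyi : y i = j
      · have hphiB : phiProj hp i y ∈ B := by
          by_contra h; exact cy ⟨hyi, h⟩
        refine key x (phiProj hp i y)
          (fun k hk h => by rw [hpk x k hk]; rw [hpk y k hk] at h; exact h)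
          (fun h => absurd (congrArg Fin.val h) (by rw [cx.1, hpi]; exact fun hh => hj hh))
          (hAB x hx _ hphiB)
      · refine key x y
          (fun k hk h => by rw [hpk x k hk]; exact h)
          (fun h => absurd (cx.1 ▸ h) (fun hh => hyi hh.symm))
          (hAB x hx y hy)
    · -- y shifted, x not
      rw [if_neg cx] at hfx; rw [if_pos cy] at hfy
      subst hfx; subst hfy
      by_cases hxi : x i = j
      · have hphiA : phiProj hp i x ∈ A := by
          by_contra h; exact cx ⟨hxi, h⟩
        refine key (phiProj hp i x) y
          (fun k hk h => by rw [hpk y k hk]; rw [hpk x k hk] at h; exact h)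
          (fun h => absurd (congrArg Fin.val h) (by rw [cy.1, hpi]; exact fun hh => hj hh.symm))
          (hAB _ hphiA y hy)
      · refine key x y
          (fun k hk h => by rw [hpk y k hk]; exact h)
          (fun h => absurd (cy.1 ▸ h) hxi)
          (hAB x hx y hy)
    · rw [if_neg cx] at hfx; rw [if_neg cy] at hfy
      subst hfx; subst hfy
      exact hAB x hx y hy
end

section
/- Let p = (p_1,…,p_n) be a size vector with min_i p_i = 2 and let I = {i ∈ [n] : p_i = 2}. For a set W of functions from I to [2], define A_W = {x ∈ S_p : there exists f ∈ W with x_i = f(i) for every i ∈ I} and B_W = {y ∈ S_p : there is no f ∈ W with y_i ≠ f(i) for every i ∈ I}. Then: (a) for every such W, the families A_W and B_W are cross-intersecting; (b) if |W| = 2^{|I|−1}, then |A_W|·|B_W| = |S_p|²/4 and (A_W, B_W) is a maximal cross-intersecting pair; and (c) every maximal cross-intersecting pair (A, B) in S_p equals (A_W, B_W) for some set W of functions from I to [2] with |W| = 2^{|I|−1}. -/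
open Finset

open scoped Classical

/-- For a set `W` of functions from `I = {i : p_i = 2}` to `[2]` (modelled as
`Fin 2`), the family `A_W = {x ∈ S_p : ∃ f ∈ W, x_i = f(i) for all i ∈ I}`
(values compared via the identification of `[p i]` with `Fin (p i)`). -/
noncomputable def AW {n : ℕ} {p : Fin n → ℕ}
    (W : Finset ({i : Fin n // p i = 2} → Fin 2)) :
    Finset (∀ i, Fin (p i)) :=
  univ.filter (fun x =>
    ∃ f ∈ W, ∀ i : {i : Fin n // p i = 2}, ((x i.1 : ℕ) = (f i : ℕ)))

/-- For a set `W` of functions from `I = {i : p_i = 2}` to `[2]`, the family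
`B_W = {y ∈ S_p : ¬∃ f ∈ W, y_i ≠ f(i) for all i ∈ I}`. -/
noncomputable def BW {n : ℕ} {p : Fin n → ℕ}
    (W : Finset ({i : Fin n // p i = 2} → Fin 2)) :
    Finset (∀ i, Fin (p i)) :=
  univ.filter (fun y =>
    ¬ ∃ f ∈ W, ∀ i : {i : Fin n // p i = 2}, ((y i.1 : ℕ) ≠ (f i : ℕ)))



namespace MaxPairsAux

open Finset
open scoped Classical

variable {n : ℕ} {p : Fin n → ℕ}

noncomputable def phi (p : Fin n → ℕ) :
    (∀ i, Fin (p i)) ≃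
      (({i : Fin n // p i = 2} → Fin 2) × (∀ i : {i : Fin n // ¬ p i = 2}, Fin (p i.1))) :=
  (Equiv.piEquivPiSubtypeProd (fun i => p i = 2) (fun i => Fin (p i))).trans
    ((Equiv.piCongrRight fun i => finCongr i.2).prodCongr (Equiv.refl _))

def rho (x : ∀ i, Fin (p i)) : {i : Fin n // p i = 2} → Fin 2 :=
  fun i => Fin.cast i.2 (x i.1)

lemma phi_fst (x : ∀ i, Fin (p i)) : (phi p x).1 = rho x := rfl

lemma nz (hp : ∀ i, 2 ≤ p i) (i : Fin n) : NeZero (p i) := ⟨by have := hp i; omega⟩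

def psi (hp : ∀ i, 2 ≤ p i) (x : ∀ i, Fin (p i)) : ∀ i, Fin (p i) :=
  fun i => haveI := nz hp i; x i + 1

def psiInv (hp : ∀ i, 2 ≤ p i) (x : ∀ i, Fin (p i)) : ∀ i, Fin (p i) :=
  fun i => haveI := nz hp i; x i - 1

section hp
variable (hp : ∀ i, 2 ≤ p i)

lemma psiInv_psi (x : ∀ i, Fin (p i)) : psiInv hp (psi hp x) = x := by
  funext i; haveI := nz hp i
  show x i + 1 - 1 = x i
  exact add_sub_cancel_right (x i) 1

lemma psi_psiInv (x : ∀ i, Fin (p i)) : psi hp (psiInv hp x) = x := by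
  funext i; haveI := nz hp i
  show x i - 1 + 1 = x i
  exact sub_add_cancel (x i) 1

lemma psi_inj : Function.Injective (psi hp) :=
  Function.LeftInverse.injective (psiInv_psi hp)

lemma one_ne_zero' (i : Fin n) :
    (haveI := nz hp i; (1 : Fin (p i))) ≠ (haveI := nz hp i; (0 : Fin (p i))) := by
  haveI := nz hp i
  rw [Ne, Fin.one_eq_zero_iff]
  have := hp i; omega

lemma psi_ne (x : ∀ i, Fin (p i)) (i : Fin n) : x i ≠ psi hp x i := by
  haveI := nz hp i
  show x i ≠ x i + 1
  rw [Ne, left_eq_add]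
  exact one_ne_zero' hp i

end hp

lemma cast_comm_sub_one (m : ℕ) (h : m = 2) (a : Fin m) :
    Fin.cast h (haveI : NeZero m := ⟨by omega⟩; a - 1) = Fin.cast h a + 1 := by
  subst h; revert a; decide

lemma fin2_eq_iff (m : ℕ) (h : m = 2) (a : Fin m) (b : Fin 2) :
    ((a : ℕ) = (b : ℕ)) ↔ Fin.cast h a = b := by
  rw [Fin.ext_iff, Fin.coe_cast]

lemma fin2_ne_iff (a b : Fin 2) : a ≠ b ↔ a + 1 = b := by revert a b; decide

lemma fin2_ne_val_iff (m : ℕ) (h : m = 2) (a : Fin m) (b : Fin 2) :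
    ((a : ℕ) ≠ (b : ℕ)) ↔ Fin.cast h a + 1 = b := by
  rw [← fin2_ne_iff, Ne, Ne, ← fin2_eq_iff m h]

section hp
variable (hp : ∀ i, 2 ≤ p i)

lemma rho_psiInv (y : ∀ i, Fin (p i)) (i : {i : Fin n // p i = 2}) :
    rho (psiInv hp y) i = rho y i + 1 := by
  show Fin.cast i.2 (haveI := nz hp i.1; y i.1 - 1) = Fin.cast i.2 (y i.1) + 1
  exact cast_comm_sub_one (p i.1) i.2 (y i.1)

lemma AW_mem (W : Finset ({i : Fin n // p i = 2} → Fin 2)) (x : ∀ i, Fin (p i)) :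
    (∃ f ∈ W, ∀ i : {i : Fin n // p i = 2}, ((x i.1 : ℕ) = (f i : ℕ))) ↔ rho x ∈ W := by
  constructor
  · rintro ⟨f, hf, hxf⟩
    have : rho x = f := funext fun i => (fin2_eq_iff _ i.2 _ _).mp (hxf i)
    rwa [this]
  · intro hx
    exact ⟨rho x, hx, fun i => (fin2_eq_iff _ i.2 _ _).mpr rfl⟩

lemma BW_mem (W : Finset ({i : Fin n // p i = 2} → Fin 2)) (y : ∀ i, Fin (p i)) :
    (∃ f ∈ W, ∀ i : {i : Fin n // p i = 2}, ((y i.1 : ℕ) ≠ (f i : ℕ))) ↔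
      rho (psiInv hp y) ∈ W := by
  constructor
  · rintro ⟨f, hf, hyf⟩
    have : rho (psiInv hp y) = f := by
      funext i
      rw [rho_psiInv hp]
      exact (fin2_ne_val_iff _ i.2 _ _).mp (hyf i)
    rwa [this]
  · intro hy
    refine ⟨rho (psiInv hp y), hy, fun i => ?_⟩
    rw [fin2_ne_val_iff _ i.2]
    exact (rho_psiInv hp y i).symm

end hp

lemma AW_eq (W : Finset ({i : Fin n // p i = 2} → Fin 2)) :
    AW W = univ.filter (fun x => rho x ∈ W) := by
  ext x
  simp only [AW, mem_filter, mem_univ, true_and]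
  exact AW_mem W x

lemma BW_eq (hp : ∀ i, 2 ≤ p i) (W : Finset ({i : Fin n // p i = 2} → Fin 2)) :
    BW W = univ \ (AW W).image (psi hp) := by
  ext y
  simp only [BW, mem_filter, mem_univ, true_and, mem_sdiff, Finset.mem_image, AW_eq]
  rw [BW_mem hp W y]
  constructor
  · intro hy
    rintro ⟨x, hx, rfl⟩
    rw [psiInv_psi hp] at hy
    exact hy hx
  · intro hy h
    exact hy ⟨psiInv hp y, h, psi_psiInv hp y⟩

lemma card_filter_rho (W : Finset ({i : Fin n // p i = 2} → Fin 2)) :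
    (univ.filter fun x : ∀ i, Fin (p i) => rho x ∈ W).card
      = W.card * Fintype.card (∀ i : {i : Fin n // ¬ p i = 2}, Fin (p i.1)) := by
  rw [← Finset.card_univ (α := ∀ i : {i : Fin n // ¬ p i = 2}, Fin (p i.1)),
    ← Finset.card_product]
  apply Finset.card_bij (fun x _ => phi p x)
  · intro x hx
    rw [Finset.mem_product]
    exact ⟨by rw [phi_fst]; exact (mem_filter.mp hx).2, mem_univ _⟩
  · intro x _ y _ h
    exact (phi p).injective h
  · intro z hz
    refine ⟨(phi p).symm z, ?_, (phi p).apply_symm_apply z⟩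
    rw [mem_filter]
    refine ⟨mem_univ _, ?_⟩
    have h1 : rho ((phi p).symm z) = z.1 := by
      rw [← phi_fst, (phi p).apply_symm_apply]
    rw [h1]
    exact (Finset.mem_product.mp hz).1

lemma card_univ_S : Fintype.card (∀ i, Fin (p i)) = ∏ i, p i := by
  simp [Fintype.card_pi]

lemma prod_split :
    ∏ i, p i = 2 ^ (Fintype.card {i : Fin n // p i = 2})
      * Fintype.card (∀ i : {i : Fin n // ¬ p i = 2}, Fin (p i.1)) := by
  rw [← card_univ_S (p := p), Fintype.card_congr (phi p), Fintype.card_prod]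
  congr 1
  simp [Fintype.card_fun]

lemma AW_card (W : Finset ({i : Fin n // p i = 2} → Fin 2)) :
    (AW W).card = W.card * Fintype.card (∀ i : {i : Fin n // ¬ p i = 2}, Fin (p i.1)) := by
  rw [AW_eq, card_filter_rho]

lemma BW_card (hp : ∀ i, 2 ≤ p i) (W : Finset ({i : Fin n // p i = 2} → Fin 2)) :
    (BW W).card = ∏ i, p i - (AW W).card := by
  rw [BW_eq hp, card_sdiff_of_subset (subset_univ _), card_univ, card_univ_S,
    Finset.card_image_of_injective _ (psi_inj hp)]

lemma crossint_AW_BW (hp : ∀ i, 2 ≤ p i) (W : Finset ({i : Fin n // p i = 2} → Fin 2)) :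
    CrossInt 1 (AW W) (BW W) := by
  intro x hx y hy
  rw [AW_eq, mem_filter] at hx
  rw [BW_eq hp, mem_sdiff] at hy
  have hyim : psiInv hp y ∉ AW W := by
    intro h
    exact hy.2 (Finset.mem_image.mpr ⟨psiInv hp y, h, psi_psiInv hp y⟩)
  rw [AW_eq, mem_filter] at hyim
  have hne : rho x ≠ rho (psiInv hp y) := by
    intro h
    exact hyim ⟨mem_univ _, h ▸ hx.2⟩
  obtain ⟨i, hi⟩ := Function.ne_iff.mp hne
  have hxy : x i.1 = y i.1 := by
    rw [rho_psiInv hp] at hi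
    have h2 : rho x i = rho y i := by
      revert hi
      generalize rho x i = a
      generalize rho y i = b
      revert a b; decide
    have := (fin2_eq_iff (p i.1) i.2 (x i.1) (rho y i)).mpr h2
    rw [show ((rho y i : ℕ)) = ((y i.1 : ℕ)) from rfl] at this
    exact Fin.val_injective this
  rw [Finset.one_le_card]
  exact ⟨i.1, mem_filter.mpr ⟨mem_univ _, hxy⟩⟩

lemma B_subset (hp : ∀ i, 2 ≤ p i) {A B : Finset (∀ i, Fin (p i))}
    (h : CrossInt 1 A B) : B ⊆ univ \ A.image (psi hp) := by
  intro y hy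
  rw [mem_sdiff]
  refine ⟨mem_univ _, ?_⟩
  rw [Finset.mem_image]
  rintro ⟨a, ha, rfl⟩
  have h1 := h a ha (psi hp a) hy
  have h2 : (univ.filter fun i => a i = psi hp a i) = ∅ := by
    ext i; simp [psi_ne hp a i]
  rw [h2] at h1
  simp at h1

lemma card_sum_bound (hp : ∀ i, 2 ≤ p i) {A B : Finset (∀ i, Fin (p i))}
    (h : CrossInt 1 A B) : A.card + B.card ≤ ∏ i, p i := by
  have h1 := Finset.card_le_card (B_subset hp h)
  rw [card_sdiff_of_subset (subset_univ _), card_univ, card_univ_S,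
    Finset.card_image_of_injective _ (psi_inj hp)] at h1
  have h2 : A.card ≤ ∏ i, p i := by
    rw [← card_univ_S (p := p)]; exact Finset.card_le_univ A
  omega

lemma four_mul_le_sq (a b : ℕ) : 4 * (a * b) ≤ (a + b) ^ 2 := by
  have h : (4 : ℤ) * (a * b) ≤ ((a : ℤ) + b) ^ 2 := by nlinarith [sq_nonneg ((a : ℤ) - b)]
  exact_mod_cast h

lemma prod_bound (hp : ∀ i, 2 ≤ p i) {A B : Finset (∀ i, Fin (p i))}
    (h : CrossInt 1 A B) : 4 * (A.card * B.card) ≤ (∏ i, p i) ^ 2 := by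
  calc 4 * (A.card * B.card) ≤ (A.card + B.card) ^ 2 := four_mul_le_sq _ _
    _ ≤ (∏ i, p i) ^ 2 := Nat.pow_le_pow_left (card_sum_bound hp h) 2

lemma exists_avoid (m : ℕ) (h : 3 ≤ m) (u v : Fin m) : ∃ w : Fin m, w ≠ u ∧ w ≠ v := by
  have hsub : ¬ (univ : Finset (Fin m)) ⊆ {u, v} := by
    intro hs
    have h1 := Finset.card_le_card hs
    have h2 : ({u, v} : Finset (Fin m)).card ≤ 2 :=
      (Finset.card_insert_le _ _).trans (by simp)
    simp [Finset.card_univ] at h1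
    omega
  obtain ⟨w, hw⟩ := Finset.sdiff_nonempty.mpr hsub
  simp only [Finset.mem_sdiff, Finset.mem_insert, Finset.mem_singleton] at hw
  exact ⟨w, by tauto, by tauto⟩

lemma fin2_succ_succ (a : Fin 2) : a + 1 + 1 = a := by revert a; decide

lemma exists_W_half (hI : Nonempty {i : Fin n // p i = 2}) :
    ∃ W : Finset ({i : Fin n // p i = 2} → Fin 2),
      W.card = 2 ^ (Fintype.card {i : Fin n // p i = 2} - 1) := by
  classical
  obtain ⟨i₀⟩ := hI
  refine ⟨univ.filter (fun f => f i₀ = 0), ?_⟩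
  set s0 := univ.filter (fun f : {i : Fin n // p i = 2} → Fin 2 => f i₀ = 0) with hs0
  set s1 := univ.filter (fun f : {i : Fin n // p i = 2} → Fin 2 => ¬ f i₀ = 0) with hs1
  have hsum : s0.card + s1.card = 2 ^ Fintype.card {i : Fin n // p i = 2} := by
    rw [hs0, hs1, Finset.card_filter_add_card_filter_not, card_univ]
    simp [Fintype.card_fun]
  have hmem0 : ∀ f ∈ s0, Function.update f i₀ (f i₀ + 1) ∈ s1 := by
    intro f hf
    rw [hs0, mem_filter] at hf
    rw [hs1, mem_filter]
    refine ⟨mem_univ _, ?_⟩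
    rw [Function.update_self, hf.2]
    decide
  have hmem1 : ∀ f ∈ s1, Function.update f i₀ (f i₀ + 1) ∈ s0 := by
    intro f hf
    rw [hs1, mem_filter] at hf
    rw [hs0, mem_filter]
    refine ⟨mem_univ _, ?_⟩
    rw [Function.update_self]
    have : f i₀ = 1 := by
      have := hf.2; revert this; generalize f i₀ = a; revert a; decide
    rw [this]; decide
  have hinv : ∀ f : {i : Fin n // p i = 2} → Fin 2,
      Function.update (Function.update f i₀ (f i₀ + 1)) i₀
        (Function.update f i₀ (f i₀ + 1) i₀ + 1) = f := by
    intro f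
    rw [Function.update_self, fin2_succ_succ, Function.update_idem, Function.update_eq_self]
  have heq : s0.card = s1.card := by
    apply Finset.card_bij' (fun f _ => Function.update f i₀ (f i₀ + 1))
      (fun f _ => Function.update f i₀ (f i₀ + 1)) hmem0 hmem1
    · intro f _; exact hinv f
    · intro f _; exact hinv f
  have hcI : 1 ≤ Fintype.card {i : Fin n // p i = 2} :=
    Fintype.card_pos_iff.mpr ⟨i₀⟩
  have hpow : 2 ^ Fintype.card {i : Fin n // p i = 2}
      = 2 * 2 ^ (Fintype.card {i : Fin n // p i = 2} - 1) := by
    conv_lhs => rw [show Fintype.card {i : Fin n // p i = 2}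
      = (Fintype.card {i : Fin n // p i = 2} - 1) + 1 by omega]
    rw [pow_succ]
    ring
  omega

lemma two_pow_card (hI : Nonempty {i : Fin n // p i = 2}) :
    2 ^ Fintype.card {i : Fin n // p i = 2}
      = 2 * 2 ^ (Fintype.card {i : Fin n // p i = 2} - 1) := by
  have hcI : 1 ≤ Fintype.card {i : Fin n // p i = 2} := Fintype.card_pos_iff.mpr hI
  conv_lhs => rw [show Fintype.card {i : Fin n // p i = 2}
    = (Fintype.card {i : Fin n // p i = 2} - 1) + 1 by omega]
  rw [pow_succ]
  ring

lemma M_pos (hp : ∀ i, 2 ≤ p i) :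
    0 < Fintype.card (∀ i : {i : Fin n // ¬ p i = 2}, Fin (p i.1)) := by
  haveI : Nonempty (∀ i : {i : Fin n // ¬ p i = 2}, Fin (p i.1)) :=
    ⟨fun i => ⟨0, by have := hp i.1; omega⟩⟩
  exact Fintype.card_pos

lemma part_b (hp : ∀ i, 2 ≤ p i) (hI : Nonempty {i : Fin n // p i = 2})
    (W : Finset ({i : Fin n // p i = 2} → Fin 2))
    (hW : W.card = 2 ^ (Fintype.card {i : Fin n // p i = 2} - 1)) :
    4 * ((AW W).card * (BW W).card) = (∏ i, p i) ^ 2 ∧ MaxPair 1 (AW W) (BW W) := by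
  set M := Fintype.card (∀ i : {i : Fin n // ¬ p i = 2}, Fin (p i.1)) with hM
  set K := 2 ^ (Fintype.card {i : Fin n // p i = 2} - 1) * M with hK
  have hA : (AW W).card = K := by rw [AW_card, hW]
  have hN : ∏ i, p i = 2 * K := by
    rw [prod_split (p := p), two_pow_card hI, hK, mul_assoc]
  have hB : (BW W).card = K := by
    rw [BW_card hp, hA, hN]; omega
  have hEq : 4 * ((AW W).card * (BW W).card) = (∏ i, p i) ^ 2 := by
    rw [hA, hB, hN]; ring
  refine ⟨hEq, crossint_AW_BW hp W, ?_⟩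
  intro A' B' h'
  have h1 : 4 * (A'.card * B'.card) ≤ 4 * ((AW W).card * (BW W).card) := by
    rw [hEq]; exact prod_bound hp h'
  omega

lemma part_c (hp : ∀ i, 2 ≤ p i) (hmin : ∃ i, p i = 2)
    (A B : Finset (∀ i, Fin (p i))) (hmax : MaxPair 1 A B) :
    ∃ W : Finset ({i : Fin n // p i = 2} → Fin 2),
      W.card = 2 ^ (Fintype.card {i : Fin n // p i = 2} - 1) ∧ A = AW W ∧ B = BW W := by
  classical
  have hI : Nonempty {i : Fin n // p i = 2} := ⟨⟨hmin.choose, hmin.choose_spec⟩⟩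
  obtain ⟨W₀, hW₀⟩ := exists_W_half (p := p) hI
  set N := ∏ i, p i with hNdef
  set M := Fintype.card (∀ i : {i : Fin n // ¬ p i = 2}, Fin (p i.1)) with hM
  have hb := part_b hp hI W₀ hW₀
  -- the maximum value
  have hABeq : 4 * (A.card * B.card) = N ^ 2 := by
    have h1 : 4 * (A.card * B.card) ≤ N ^ 2 := prod_bound hp hmax.1
    have h2 : (AW W₀).card * (BW W₀).card ≤ A.card * B.card :=
      hmax.2 _ _ (crossint_AW_BW hp W₀)
    have h3 : 4 * ((AW W₀).card * (BW W₀).card) = N ^ 2 := by rw [hNdef]; exact hb.1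
    omega
  have hsum : A.card + B.card ≤ N := card_sum_bound hp hmax.1
  -- |A| = |B| and |A| + |B| = N
  have hcards : A.card = B.card ∧ A.card + B.card = N := by
    have hz : (4 : ℤ) * ((A.card : ℤ) * B.card) = (N : ℤ) ^ 2 := by exact_mod_cast hABeq
    have hsz : ((A.card : ℤ) + B.card) ≤ (N : ℤ) := by exact_mod_cast hsum
    have hnn : (0 : ℤ) ≤ (A.card : ℤ) + B.card := by positivity
    have h1 : ((A.card : ℤ) + B.card) ^ 2 ≤ (N : ℤ) ^ 2 := by nlinarith
    have h3 : ((A.card : ℤ) - B.card) ^ 2 ≤ 0 := by nlinarith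
    have h4 : (A.card : ℤ) = B.card := by nlinarith [sq_nonneg ((A.card : ℤ) - B.card)]
    have h5 : ((A.card : ℤ) + B.card) ^ 2 = (N : ℤ) ^ 2 := by nlinarith
    have h6 : (A.card + B.card) ^ 2 = N ^ 2 := by exact_mod_cast h5
    have h7 : A.card + B.card = N := Nat.pow_left_injective (by norm_num) h6
    exact ⟨by exact_mod_cast h4, h7⟩
  -- B is exactly the complement of psi(A)
  have hBeq : B = univ \ A.image (psi hp) := by
    apply Finset.eq_of_subset_of_card_le (B_subset hp hmax.1)
    rw [card_sdiff_of_subset (subset_univ _), card_univ, card_univ_S,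
      Finset.card_image_of_injective _ (psi_inj hp)]
    omega
  have hcomp : ∀ y : ∀ i, Fin (p i), y ∉ B → psiInv hp y ∈ A := by
    intro y hy
    have hyim : y ∈ A.image (psi hp) := by
      by_contra hyim
      exact hy (hBeq ▸ mem_sdiff.mpr ⟨mem_univ _, hyim⟩)
    obtain ⟨x, hx, hxy⟩ := Finset.mem_image.mp hyim
    have hxe : x = psiInv hp y := by rw [← hxy, psiInv_psi hp]
    rwa [← hxe]
  -- the step lemma: from a ∈ A to any b avoiding psiInv a in every coordinate
  have hstep : ∀ a ∈ A, ∀ b : ∀ i, Fin (p i),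
      (∀ i, b i ≠ psiInv hp a i) → b ∈ A := by
    intro a ha b hb
    have hy : psi hp b ∉ B := by
      intro hyB
      have h1 := hmax.1 a ha (psi hp b) hyB
      have h2 : (univ.filter fun i => a i = psi hp b i) = ∅ := by
        ext i
        simp only [mem_filter, mem_univ, true_and, Finset.notMem_empty, iff_false]
        intro heq
        apply hb i
        haveI := nz hp i
        show b i = a i - 1
        rw [heq]
        show b i = b i + 1 - 1
        rw [add_sub_cancel_right]
      rw [h2] at h1
      simp at h1
    have := hcomp (psi hp b) hy
    rwa [psiInv_psi hp] at this
  -- A is a cylinder over the coordinates with  p i = 2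
  have hcyl : ∀ a ∈ A, ∀ c : ∀ i, Fin (p i),
      (∀ i : {i : Fin n // p i = 2}, c i.1 = a i.1) → c ∈ A := by
    intro a ha c hc
    have hex : ∀ i : Fin n, ∃ v : Fin (p i), v ≠ psiInv hp a i ∧ psi hp c i ≠ v := by
      intro i
      haveI := nz hp i
      by_cases h2 : p i = 2
      · refine ⟨a i, ?_, ?_⟩
        · show a i ≠ a i - 1
          intro h
          have h' : a i - 1 = a i := h.symm
          rw [sub_eq_self] at h'
          exact one_ne_zero' hp i h'
        · show c i + 1 ≠ a i
          have hci : c i = a i := hc ⟨i, h2⟩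
          rw [hci, Ne, add_eq_left]
          exact one_ne_zero' hp i
      · have h3 : 3 ≤ p i := by have := hp i; omega
        obtain ⟨w, hw1, hw2⟩ := exists_avoid (p i) h3 (psiInv hp a i) (psi hp c i)
        exact ⟨w, hw1, hw2.symm⟩
    choose b hb1 hb2 using hex
    have hbA : b ∈ A := hstep a ha b hb1
    apply hstep b hbA c
    intro i heq
    haveI := nz hp i
    apply hb2 i
    show c i + 1 = b i
    have heq' : c i = b i - 1 := heq
    rw [heq']
    exact sub_add_cancel (b i) 1
  -- A = AW V for V the image of A under rho
  set V := A.image rho with hV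
  have hAeq : A = AW V := by
    rw [AW_eq]
    ext x
    simp only [mem_filter, mem_univ, true_and]
    constructor
    · intro hx
      exact Finset.mem_image_of_mem _ hx
    · intro hx
      obtain ⟨a, ha, hax⟩ := Finset.mem_image.mp hx
      apply hcyl a ha x
      intro i
      have h1 : rho a i = rho x i := by rw [hax]
      have h2 : ((rho a i : ℕ)) = ((rho x i : ℕ)) := congrArg Fin.val h1
      exact Fin.val_injective (show ((x i.1 : ℕ)) = ((a i.1 : ℕ)) from h2.symm)
  have hBeq2 : B = BW V := by rw [hBeq, hAeq, BW_eq hp]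
  have hVcard : V.card = 2 ^ (Fintype.card {i : Fin n // p i = 2} - 1) := by
    have h1 : A.card = V.card * M := by rw [hAeq, AW_card]
    have hN2 : N = 2 * (2 ^ (Fintype.card {i : Fin n // p i = 2} - 1) * M) := by
      rw [hNdef, prod_split (p := p), two_pow_card hI, mul_assoc]
    have hMpos : 0 < M := M_pos hp
    have h2A : 2 * A.card = N := by omega
    have h3 : 2 * (V.card * M) = 2 * (2 ^ (Fintype.card {i : Fin n // p i = 2} - 1) * M) := by
      rw [← h1, h2A, hN2]
    have h4 : V.card * M = 2 ^ (Fintype.card {i : Fin n // p i = 2} - 1) * M :=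
      Nat.eq_of_mul_eq_mul_left (by norm_num) h3
    exact Nat.eq_of_mul_eq_mul_right hMpos h4
  exact ⟨V, hVcard, hAeq, hBeq2⟩

end MaxPairsAux

/-- Characterization of maximal cross-intersecting pairs when `min_i p_i = 2`:
(a) each pair `(A_W, B_W)` is cross-intersecting;
(b) if `|W| = 2^{|I|-1}` then `|A_W|·|B_W| = |S_p|²/4` (stated with the
division cleared) and `(A_W, B_W)` is a maximal cross-intersecting pair;
(c) every maximal cross-intersecting pair is of the form `(A_W, B_W)` with
`|W| = 2^{|I|-1}`. -/
theorem maxPairs_min_two {n : ℕ} (p : Fin n → ℕ) (hp : ∀ i, 2 ≤ p i)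
    (hmin : ∃ i, p i = 2) :
    (∀ W : Finset ({i : Fin n // p i = 2} → Fin 2),
      CrossInt 1 (AW W) (BW W)) ∧
    (∀ W : Finset ({i : Fin n // p i = 2} → Fin 2),
      W.card = 2 ^ (Fintype.card {i : Fin n // p i = 2} - 1) →
      4 * ((AW W).card * (BW W).card) = (∏ i, p i) ^ 2 ∧
      MaxPair 1 (AW W) (BW W)) ∧
    (∀ A B : Finset (∀ i, Fin (p i)), MaxPair 1 A B →
      ∃ W : Finset ({i : Fin n // p i = 2} → Fin 2),
        W.card = 2 ^ (Fintype.card {i : Fin n // p i = 2} - 1) ∧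
        A = AW W ∧ B = BW W) := by
  have hI : Nonempty {i : Fin n // p i = 2} := ⟨⟨hmin.choose, hmin.choose_spec⟩⟩
  exact ⟨fun W => MaxPairsAux.crossint_AW_BW hp W,
    fun W hW => MaxPairsAux.part_b hp hI W hW,
    fun A B h => MaxPairsAux.part_c hp hmin A B h⟩
end
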